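/- arXiv:2312.06604 — 2 statements merged into one kernel-verified Lean document; each statement's English description precedes it below -/
import Mathlib

section
/- Under the hypotheses of the decomposition lemma with κ ∈ (0, 1/5] and |supp(f₊)| ≥ |supp(f₋)|, the inequality ‖f₊‖₂² ≤ ((1 + ς + κ + 2√2·√κ)/2) ‖f‖₂² holds, where ς = √κ/√(1-κ) and f₊ = max(f,0). -/
open Finset

/-- The signed indicator `1_{f>0} - 1_{f<0}`. -/
noncomputable def sgnInd {V : Type*} (f : V → ℝ) : V → ℝ :=
  fun v => if 0 < f v then 1 else if f v < 0 then -1 else 0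

/-- The structured component `f_str = (1/n)⟨|f|, 1_V⟩(1_{f>0} - 1_{f<0})`. -/
noncomputable def fStr {V : Type*} [Fintype V] (f : V → ℝ) : V → ℝ :=
  fun v => ((∑ w, f w * sgnInd f w) / (Fintype.card V : ℝ)) * sgnInd f v

/-!
Let `α` be the mean of `|f|` and `g = |f| - α`, so that `‖g‖₂ = ‖f_sml‖₂` when `f` vanishes
nowhere. Since `g ⟂ 1_V`, the spectral gap gives `⟨Tg, g⟩ ≤ dμ₂‖g‖²`, while
`⟨T|f|, |f|⟩ = ⟨Tg, g⟩ + d n α²` by regularity and `⟨T|f|, |f|⟩ ≥ -⟨Tf, f⟩ = -dμ‖f‖²` because `T`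
has nonnegative entries. With `‖f‖² = ‖g‖² + nα²` this yields `‖g‖² ≤ κ‖f‖²`. On the other hand
`‖f₊‖² - ‖f₋‖² = ⟨sgn f, f²⟩` differs from `⟨sgn f, g²⟩ ≤ ‖g‖²` by
`-(|supp f₊| - |supp f₋|) α² ≤ 0`, using `∑ f = 0`. Hence `‖f₊‖² ≤ (1 + κ)/2 · ‖f‖²`, which is
stronger than the claimed bound.
-/

section SignedIndicator

variable {V : Type*}

theorem sum_sgnInd [Fintype V] (f : V → ℝ) :
    ∑ v, sgnInd f v = (#{v | 0 < f v} : ℝ) - #{v | f v < 0} := by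
  have hsplit : ∀ v, sgnInd f v = (if 0 < f v then 1 else 0) - (if f v < 0 then 1 else 0) := by
    intro v
    unfold sgnInd
    split_ifs <;> linarith
  simp only [hsplit, sum_sub_distrib, sum_boole]

theorem sgnInd_mul_sq (f : V → ℝ) (c : ℝ) (v : V) :
    sgnInd f v * f v ^ 2 = sgnInd f v * (|f v| - c) ^ 2 + 2 * c * f v - c ^ 2 * sgnInd f v := by
  unfold sgnInd
  split_ifs with hpos hneg
  · rw [abs_of_pos hpos]; ring
  · rw [abs_of_neg hneg]; ring
  · rw [le_antisymm (not_lt.mp hpos) (not_lt.mp hneg)]; ring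

theorem sgnInd_mul_sq_le_sq (f : V → ℝ) (x : ℝ) (v : V) : sgnInd f v * x ^ 2 ≤ x ^ 2 := by
  unfold sgnInd
  split_ifs <;> nlinarith [sq_nonneg x]

theorem max_zero_sq_eq (f : V → ℝ) (v : V) :
    max (f v) 0 ^ 2 = (f v ^ 2 + sgnInd f v * f v ^ 2) / 2 := by
  unfold sgnInd
  split_ifs with hpos hneg
  · rw [max_eq_left hpos.le]; ring
  · rw [max_eq_right hneg.le]; ring
  · rw [le_antisymm (not_lt.mp hpos) (not_lt.mp hneg)]; simp

/-- The recentring constant `c` is arbitrary because `∑ f = 0` kills the cross term. -/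
theorem sum_sgnInd_mul_sq_le [Fintype V] {f : V → ℝ} (horth : ∑ v, f v = 0)
    (hsgn : 0 ≤ ∑ v, sgnInd f v) (c : ℝ) : ∑ v, sgnInd f v * f v ^ 2 ≤ ∑ v, (|f v| - c) ^ 2 :=
  calc ∑ v, sgnInd f v * f v ^ 2
      = ∑ v, sgnInd f v * (|f v| - c) ^ 2 - c ^ 2 * ∑ v, sgnInd f v := by
        simp only [sgnInd_mul_sq f c, sum_add_distrib, sum_sub_distrib, ← mul_sum, horth]
        ring
    _ ≤ ∑ v, (|f v| - c) ^ 2 := by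
        have := sum_le_sum fun v (_ : v ∈ univ) => sgnInd_mul_sq_le_sq f (|f v| - c) v
        nlinarith [mul_nonneg (sq_nonneg c) hsgn]

end SignedIndicator

theorem sum_sub_sum_div_card {V : Type*} [Fintype V] (φ : V → ℝ) :
    ∑ v, (φ v - (∑ w, φ w) / Fintype.card V) = 0 := by
  rw [sum_sub_distrib, sum_const, card_univ, nsmul_eq_mul]
  rcases (Fintype.card V).eq_zero_or_pos with h | h
  · have : IsEmpty V := Fintype.card_eq_zero_iff.mp h
    simp
  · field_simp
    ring

noncomputable def quadForm {V : Type*} [Fintype V] (a : V → V → ℝ) (g : V → ℝ) : ℝ :=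
  ∑ u, ∑ v, a u v * g u * g v

section RegularKernel

variable {V : Type*} [Fintype V] {a : V → V → ℝ} {d : ℝ}

theorem sum_sum_mul_left (hrow : ∀ u, ∑ v, a u v = d) (φ : V → ℝ) :
    ∑ u, ∑ v, a u v * φ u = d * ∑ u, φ u := by
  simp only [← sum_mul, hrow, mul_sum]

theorem sum_sum_mul_right (hsym : ∀ u v, a u v = a v u) (hrow : ∀ u, ∑ v, a u v = d)
    (φ : V → ℝ) : ∑ u, ∑ v, a u v * φ v = d * ∑ v, φ v := by
  rw [sum_comm]
  exact (sum_congr rfl fun v _ => sum_congr rfl fun u _ => by rw [hsym]).trans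
    (sum_sum_mul_left hrow φ)

theorem quadForm_of_eigen {μ : ℝ} {f : V → ℝ} (heig : ∀ u, ∑ v, a u v * f v = d * μ * f u) :
    quadForm a f = d * μ * ∑ v, f v ^ 2 := by
  have hterm : ∀ u, ∑ v, a u v * f u * f v = f u * (d * μ * f u) := fun u => by
    rw [← heig u, mul_sum]
    exact sum_congr rfl fun v _ => by ring
  simp only [quadForm, hterm, mul_sum]
  exact sum_congr rfl fun u _ => by ring

theorem one_add_mul_sum_sq_nonneg (hnn : ∀ u v, 0 ≤ a u v) (hsym : ∀ u v, a u v = a v u)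
    (hrow : ∀ u, ∑ v, a u v = d) (hd : 0 < d) {μ : ℝ} {f : V → ℝ}
    (heig : ∀ u, ∑ v, a u v * f v = d * μ * f u) : 0 ≤ (1 + μ) * ∑ v, f v ^ 2 := by
  have hexpand : ∑ u, ∑ v, a u v * (f u + f v) ^ 2 = 2 * d * ((1 + μ) * ∑ v, f v ^ 2) :=
    calc ∑ u, ∑ v, a u v * (f u + f v) ^ 2
        = ∑ u, ∑ v, (a u v * f u ^ 2 + a u v * f v ^ 2 + 2 * (a u v * f u * f v)) :=
          sum_congr rfl fun u _ => sum_congr rfl fun v _ => by ring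
      _ = d * ∑ v, f v ^ 2 + d * ∑ v, f v ^ 2 + 2 * quadForm a f := by
          simp only [sum_add_distrib, ← mul_sum, quadForm]
          rw [sum_sum_mul_left hrow, sum_sum_mul_right hsym hrow]
      _ = 2 * d * ((1 + μ) * ∑ v, f v ^ 2) := by
          rw [quadForm_of_eigen heig]; ring
  have hsq_nonneg : 0 ≤ ∑ u, ∑ v, a u v * (f u + f v) ^ 2 :=
    sum_nonneg fun u _ => sum_nonneg fun v _ => mul_nonneg (hnn u v) (sq_nonneg _)
  rw [hexpand] at hsq_nonneg
  exact (mul_nonneg_iff_of_pos_left (by positivity)).mp hsq_nonneg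

theorem neg_quadForm_le_quadForm_abs (hnn : ∀ u v, 0 ≤ a u v) (f : V → ℝ) :
    -quadForm a f ≤ quadForm a fun v => |f v| := by
  simp only [quadForm, ← sum_neg_distrib]
  refine sum_le_sum fun u _ => sum_le_sum fun v _ => ?_
  have hprod : 0 ≤ |f u| * |f v| + f u * f v := by
    rw [← abs_mul]; linarith [neg_abs_le (f u * f v)]
  nlinarith [mul_nonneg (hnn u v) hprod]

theorem quadForm_add_const (hsym : ∀ u v, a u v = a v u) (hrow : ∀ u, ∑ v, a u v = d)
    {g : V → ℝ} (hg : ∑ v, g v = 0) (c : ℝ) :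
    quadForm a (fun v => g v + c) = quadForm a g + Fintype.card V * d * c ^ 2 :=
  calc quadForm a (fun v => g v + c)
      = ∑ u, ∑ v, (a u v * g u * g v + c * (a u v * g u) + c * (a u v * g v) + c ^ 2 * a u v) :=
        sum_congr rfl fun u _ => sum_congr rfl fun v _ => by ring
    _ = quadForm a g + Fintype.card V * d * c ^ 2 := by
        simp only [sum_add_distrib, ← mul_sum, quadForm, hrow]
        rw [sum_sum_mul_left hrow, sum_sum_mul_right hsym hrow, hg, sum_const, card_univ,
          nsmul_eq_mul]
        ring

end RegularKernel

theorem sum_sq_add_const {V : Type*} [Fintype V] {g : V → ℝ} (hg : ∑ v, g v = 0) (c : ℝ) :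
    ∑ v, (g v + c) ^ 2 = ∑ v, g v ^ 2 + Fintype.card V * c ^ 2 := by
  simp only [add_sq, sum_add_distrib, ← sum_mul, ← mul_sum, hg, sum_const, card_univ,
    nsmul_eq_mul]
  ring

theorem sum_sq_eq_sum_sq_abs_sub_mean_add {V : Type*} [Fintype V] (f : V → ℝ) :
    ∑ v, f v ^ 2 = ∑ v, (|f v| - (∑ w, |f w|) / Fintype.card V) ^ 2 +
      Fintype.card V * ((∑ w, |f w|) / Fintype.card V) ^ 2 := by
  simpa only [sub_add_cancel, sq_abs] using
    sum_sq_add_const (sum_sub_sum_div_card fun v => |f v|) ((∑ w, |f w|) / Fintype.card V)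

section SpectralGap

variable {V : Type*} [Fintype V] {a : V → V → ℝ} {d μ μ₂ : ℝ} {f : V → ℝ}

theorem one_sub_mul_sum_sq_abs_sub_mean_le (hnn : ∀ u v, 0 ≤ a u v)
    (hsym : ∀ u v, a u v = a v u) (hrow : ∀ u, ∑ v, a u v = d) (hd : 0 < d)
    (hray : ∀ g : V → ℝ, ∑ v, g v = 0 → quadForm a g ≤ d * μ₂ * ∑ v, g v ^ 2)
    (heig : ∀ u, ∑ v, a u v * f v = d * μ * f u) :
    (1 - μ₂) * ∑ v, (|f v| - (∑ w, |f w|) / Fintype.card V) ^ 2 ≤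
      (1 + μ) * ∑ v, f v ^ 2 := by
  set α := (∑ w, |f w|) / Fintype.card V
  set g : V → ℝ := fun v => |f v| - α
  have hg : ∑ v, g v = 0 := sum_sub_sum_div_card _
  have habs : (fun v => |f v|) = fun v => g v + α := funext fun v => by simp [g]
  have hnorm : ∑ v, f v ^ 2 = ∑ v, g v ^ 2 + Fintype.card V * α ^ 2 :=
    sum_sq_eq_sum_sq_abs_sub_mean_add f
  have hquad : -(d * μ * ∑ v, f v ^ 2) ≤ d * μ₂ * ∑ v, g v ^ 2 + Fintype.card V * d * α ^ 2 :=
    calc -(d * μ * ∑ v, f v ^ 2) = -quadForm a f := by rw [quadForm_of_eigen heig]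
      _ ≤ quadForm a fun v => |f v| := neg_quadForm_le_quadForm_abs hnn f
      _ = quadForm a g + Fintype.card V * d * α ^ 2 := by
          rw [habs, quadForm_add_const hsym hrow hg]
      _ ≤ _ := by gcongr; exact hray g hg
  rw [hnorm] at hquad ⊢
  nlinarith

theorem sum_sq_abs_sub_mean_le (hnn : ∀ u v, 0 ≤ a u v)
    (hsym : ∀ u v, a u v = a v u) (hrow : ∀ u, ∑ v, a u v = d) (hd : 0 < d)
    (hray : ∀ g : V → ℝ, ∑ v, g v = 0 → quadForm a g ≤ d * μ₂ * ∑ v, g v ^ 2)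
    (heig : ∀ u, ∑ v, a u v * f v = d * μ * f u) (hκ : 0 < (1 + μ) / (1 - μ₂)) :
    ∑ v, (|f v| - (∑ w, |f w|) / Fintype.card V) ^ 2 ≤
      (1 + μ) / (1 - μ₂) * ∑ v, f v ^ 2 := by
  set G := ∑ v, (|f v| - (∑ w, |f w|) / Fintype.card V) ^ 2
  set F := ∑ v, f v ^ 2
  have hgap : (1 - μ₂) * G ≤ (1 + μ) * F :=
    one_sub_mul_sum_sq_abs_sub_mean_le hnn hsym hrow hd hray heig
  have hμ : 0 ≤ (1 + μ) * F := one_add_mul_sum_sq_nonneg hnn hsym hrow hd heig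
  have hF : 0 ≤ F := sum_nonneg fun v _ => sq_nonneg _
  have hGF : G ≤ F :=
    (le_add_of_nonneg_right (by positivity)).trans (sum_sq_eq_sum_sq_abs_sub_mean_add f).ge
  rcases div_pos_iff.mp hκ with ⟨hμ_pos, hgap_pos⟩ | ⟨hμ_neg, hgap_neg⟩
  · rw [div_mul_eq_mul_div, le_div_iff₀ hgap_pos]
    linarith
  · -- then `(1 + μ) F ≥ 0` forces `F = 0`
    have hF0 : F = 0 := le_antisymm (by nlinarith) hF
    rw [hF0, mul_zero]
    linarith

end SpectralGap

theorem fplus_norm_sq_upper_general {V : Type*} [Fintype V]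
    (a : V → V → ℝ) (hsym : ∀ u v, a u v = a v u) (hnn : ∀ u v, 0 ≤ a u v)
    (d μ μ₂ : ℝ) (hd : 0 < d) (hrow : ∀ u, ∑ v, a u v = d)
    (hray : ∀ g : V → ℝ, (∑ v, g v) = 0 →
      (∑ u, ∑ v, a u v * g u * g v) ≤ d * μ₂ * ∑ v, g v ^ 2)
    (f : V → ℝ) (heig : ∀ u, ∑ v, a u v * f v = d * μ * f u)
    (horth : (∑ v, f v) = 0)
    (hκ : 0 < (1 + μ) / (1 - μ₂) ∧ (1 + μ) / (1 - μ₂) ≤ 1 / 5)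
    (hsupp : (Finset.univ.filter fun v => f v < 0).card ≤
      (Finset.univ.filter fun v => 0 < f v).card) :
    (∑ v, max (f v) 0 ^ 2) ≤
      ((1 + Real.sqrt ((1 + μ) / (1 - μ₂)) / Real.sqrt (1 - (1 + μ) / (1 - μ₂)) +
            (1 + μ) / (1 - μ₂) +
            2 * Real.sqrt 2 * Real.sqrt ((1 + μ) / (1 - μ₂))) / 2) *
        ∑ v, f v ^ 2 := by
  set κ := (1 + μ) / (1 - μ₂)
  have hsml := sum_sq_abs_sub_mean_le hnn hsym hrow hd hray heig hκ.1
  have hsgn : 0 ≤ ∑ v, sgnInd f v := by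
    rw [sum_sgnInd]
    exact sub_nonneg.mpr (by exact_mod_cast hsupp)
  have hplus : ∑ v, max (f v) 0 ^ 2 ≤ (1 + κ) / 2 * ∑ v, f v ^ 2 := by
    simp only [max_zero_sq_eq, ← sum_div, sum_add_distrib]
    linarith [sum_sgnInd_mul_sq_le horth hsgn ((∑ w, |f w|) / Fintype.card V)]
  have hslack : 0 ≤ (Real.sqrt κ / Real.sqrt (1 - κ) + 2 * Real.sqrt 2 * Real.sqrt κ) / 2 *
      ∑ v, f v ^ 2 := by positivity
  linarith

/-- Under the hypotheses of the decomposition lemma with `κ ∈ (0, 1/5]` and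
`|supp(f₊)| ≥ |supp(f₋)|`, one has
`‖f₊‖₂² ≤ ((1 + ς + κ + 2√2·√κ)/2)‖f‖₂²`, where `ς = √κ/√(1-κ)`. -/
theorem fplus_norm_sq_upper {V : Type*} [Fintype V]
    (hV : 2 ≤ Fintype.card V)
    (a : V → V → ℝ) (hsym : ∀ u v, a u v = a v u) (hnn : ∀ u v, 0 ≤ a u v)
    (d μ μ₂ : ℝ) (hd : 0 < d) (hrow : ∀ u, ∑ v, a u v = d)
    (hray : ∀ g : V → ℝ, (∑ v, g v) = 0 →
      (∑ u, ∑ v, a u v * g u * g v) ≤ d * μ₂ * ∑ v, g v ^ 2)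
    (hμ₂ : μ₂ ≠ 1)
    (f : V → ℝ) (heig : ∀ u, ∑ v, a u v * f v = d * μ * f u)
    (horth : (∑ v, f v) = 0) (hnz : ∀ v, f v ≠ 0)
    (hκ : 0 < (1 + μ) / (1 - μ₂) ∧ (1 + μ) / (1 - μ₂) ≤ 1 / 5)
    (hsupp : (Finset.univ.filter fun v => f v < 0).card ≤
      (Finset.univ.filter fun v => 0 < f v).card) :
    (∑ v, max (f v) 0 ^ 2) ≤
      ((1 + Real.sqrt ((1 + μ) / (1 - μ₂)) / Real.sqrt (1 - (1 + μ) / (1 - μ₂)) +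
            (1 + μ) / (1 - μ₂) +
            2 * Real.sqrt 2 * Real.sqrt ((1 + μ) / (1 - μ₂))) / 2) *
        ∑ v, f v ^ 2 :=
  fplus_norm_sq_upper_general a hsym hnn d μ μ₂ hd hrow hray f heig horth hκ hsupp
end

section
/- Under the hypotheses of the decomposition lemma, for any permutation π of V, letting I = supp(f₊) ∩ π(supp(f₊)), the inequality |⟨f₊, (π·f)₊⟩ − (|I|/n)‖f_str‖₂²| ≤ (2√(|I|/n)·√κ + κ)·‖f‖₂² holds, where (π·f)(v) = f(π⁻¹v) and g₊ = max(g,0). -/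
/-!
Write `f = f_str + f_sml` with `f_str = c · sgn f`, `c` the mean of `|f|`. Then
`‖f_sml‖² = ‖|f| - c‖²`, and `|f| - c` has mean zero, so the spectral gap bounds its quadratic
form from above, while `⟨|f|, T|f|⟩ ≥ -⟨f, Tf⟩ = -dμ‖f‖²` bounds it from below; together these
give `‖f_sml‖² ≤ κ‖f‖²`. On `I` we have `f = c + f_sml` and `π·f = c + π·f_sml`, so
`⟨f₊, (π·f)₊⟩ - |I| c²` consists of two terms linear in `f_sml` and one quadratic term, each
controlled by Cauchy–Schwarz.
-/

open Finset

section CauchySchwarz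

open Real

variable {ι : Type*}

lemma abs_sum_mul_le_sqrt_mul_sqrt (s : Finset ι) (g h : ι → ℝ) :
    |∑ i ∈ s, g i * h i| ≤ √(∑ i ∈ s, g i ^ 2) * √(∑ i ∈ s, h i ^ 2) := by
  rw [← sqrt_mul (sum_nonneg fun _ _ => sq_nonneg _)]
  exact abs_le_sqrt (sum_mul_sq_le_sq_mul_sq s g h)

lemma abs_sum_const_mul_le (s : Finset ι) (c : ℝ) (g : ι → ℝ) :
    |∑ i ∈ s, c * g i| ≤ √(#s * c ^ 2) * √(∑ i ∈ s, g i ^ 2) := by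
  simpa using abs_sum_mul_le_sqrt_mul_sqrt s (fun _ => c) g

lemma abs_sum_add_mul_add_sub_card_mul_sq_le [Fintype ι] (s : Finset ι) (c Q : ℝ) {g h : ι → ℝ}
    (hg : ∑ i, g i ^ 2 ≤ Q) (hh : ∑ i, h i ^ 2 ≤ Q) :
    |∑ i ∈ s, (c + g i) * (c + h i) - #s * c ^ 2| ≤ 2 * √(#s * c ^ 2) * √Q + Q := by
  replace hg := (sum_le_univ_sum_of_nonneg (s := s) fun i => sq_nonneg (g i)).trans hg
  replace hh := (sum_le_univ_sum_of_nonneg (s := s) fun i => sq_nonneg (h i)).trans hh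
  have hQ : 0 ≤ Q := (sum_nonneg fun _ _ => sq_nonneg _).trans hg
  have hexpand : ∑ i ∈ s, (c + g i) * (c + h i) - #s * c ^ 2 =
      ∑ i ∈ s, c * g i + ∑ i ∈ s, c * h i + ∑ i ∈ s, g i * h i := by
    have hpoint : ∀ i, (c + g i) * (c + h i) = c ^ 2 + (c * g i + c * h i + g i * h i) :=
      fun i => by ring
    simp only [hpoint, sum_add_distrib, sum_const, nsmul_eq_mul]
    ring
  have hg' : |∑ i ∈ s, c * g i| ≤ √(#s * c ^ 2) * √Q :=
    (abs_sum_const_mul_le s c g).trans (by gcongr)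
  have hh' : |∑ i ∈ s, c * h i| ≤ √(#s * c ^ 2) * √Q :=
    (abs_sum_const_mul_le s c h).trans (by gcongr)
  have hgh : |∑ i ∈ s, g i * h i| ≤ Q :=
    (abs_sum_mul_le_sqrt_mul_sqrt s g h).trans <|
      (mul_le_mul (sqrt_le_sqrt hg) (sqrt_le_sqrt hh) (sqrt_nonneg _) (sqrt_nonneg _)).trans_eq
        (mul_self_sqrt hQ)
  rw [hexpand]
  linarith [abs_add_le (∑ i ∈ s, c * g i + ∑ i ∈ s, c * h i) (∑ i ∈ s, g i * h i),
    abs_add_le (∑ i ∈ s, c * g i) (∑ i ∈ s, c * h i)]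

end CauchySchwarz

section StructuredPart

variable {V : Type*} (f : V → ℝ)

lemma mul_sgnInd (v : V) : f v * sgnInd f v = |f v| := by
  unfold sgnInd
  rcases lt_trichotomy (f v) 0 with h | h | h
  · simp [h, not_lt.mpr h.le, abs_of_neg h]
  · simp [h]
  · simp [h, abs_of_pos h]

lemma sgnInd_of_pos {v : V} (h : 0 < f v) : sgnInd f v = 1 := if_pos h

lemma sgnInd_sq {v : V} (h : f v ≠ 0) : sgnInd f v ^ 2 = 1 := by
  rcases h.lt_or_gt with h | h <;> simp [sgnInd, h, not_lt.mpr h.le]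

variable [Fintype V]

lemma fStr_apply (v : V) : fStr f v = (∑ w, |f w|) / Fintype.card V * sgnInd f v := by
  simp only [fStr, mul_sgnInd]

lemma sum_fStr_sq (hf : ∀ v, f v ≠ 0) :
    ∑ v, fStr f v ^ 2 = Fintype.card V * ((∑ w, |f w|) / Fintype.card V) ^ 2 := by
  simp only [fStr_apply, mul_pow, sgnInd_sq f (hf _), mul_one, sum_const, card_univ, nsmul_eq_mul]

lemma sum_sub_fStr_sq (hf : ∀ v, f v ≠ 0) :
    ∑ v, (f v - fStr f v) ^ 2 = ∑ v, (|f v| - (∑ w, |f w|) / Fintype.card V) ^ 2 := by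
  refine sum_congr rfl fun v _ => ?_
  rw [fStr_apply]
  linear_combination (-2 * ((∑ w, |f w|) / Fintype.card V)) * mul_sgnInd f v +
    ((∑ w, |f w|) / Fintype.card V) ^ 2 * sgnInd_sq f (hf v) - sq_abs (f v)

end StructuredPart

section Spectral

variable {V : Type*} [Fintype V] {a : V → V → ℝ} {d : ℝ}

lemma abs_eigenvalue_le_of_row_sum (hnn : ∀ u v, 0 ≤ a u v) (hrow : ∀ u, ∑ v, a u v = d)
    {f : V → ℝ} (hf : f ≠ 0) {r : ℝ} (heig : ∀ u, ∑ v, a u v * f v = r * f u) : |r| ≤ d := by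
  obtain ⟨w, hw⟩ := Function.ne_iff.mp hf
  have : Nonempty V := ⟨w⟩
  obtain ⟨u, hu⟩ := Finite.exists_max fun v => |f v|
  have hfu : 0 < |f u| := (abs_pos.mpr hw).trans_le (hu w)
  refine le_of_mul_le_mul_right ?_ hfu
  calc |r| * |f u| = |∑ v, a u v * f v| := by rw [heig, abs_mul]
    _ ≤ ∑ v, a u v * |f v| := (abs_sum_le_sum_abs _ _).trans_eq <|
        sum_congr rfl fun v _ => by rw [abs_mul, abs_of_nonneg (hnn u v)]
    _ ≤ ∑ v, a u v * |f u| := sum_le_sum fun v _ => mul_le_mul_of_nonneg_left (hu v) (hnn u v)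
    _ = d * |f u| := by rw [← sum_mul, hrow]

lemma sum_sum_mul_mul_of_eigen {f : V → ℝ} {r : ℝ} (heig : ∀ u, ∑ v, a u v * f v = r * f u) :
    ∑ u, ∑ v, a u v * f u * f v = r * ∑ v, f v ^ 2 := by
  rw [mul_sum]
  refine sum_congr rfl fun u _ => ?_
  rw [sq, ← mul_assoc, ← heig, sum_mul]
  exact sum_congr rfl fun v _ => by ring

lemma neg_sum_sum_mul_mul_le_sum_sum_mul_abs_mul_abs (hnn : ∀ u v, 0 ≤ a u v) (f : V → ℝ) :
    -∑ u, ∑ v, a u v * f u * f v ≤ ∑ u, ∑ v, a u v * |f u| * |f v| := by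
  simp only [← sum_neg_distrib]
  refine sum_le_sum fun u _ => sum_le_sum fun v _ => ?_
  rw [mul_assoc, mul_assoc, ← abs_mul, ← mul_neg]
  exact mul_le_mul_of_nonneg_left (neg_le_abs _) (hnn u v)

lemma sum_sum_mul_sub_mul_sub (hsym : ∀ u v, a u v = a v u) (hrow : ∀ u, ∑ v, a u v = d)
    (x : V → ℝ) (c : ℝ) :
    ∑ u, ∑ v, a u v * (x u - c) * (x v - c) =
      ∑ u, ∑ v, a u v * x u * x v - c * d * (2 * ∑ v, x v - Fintype.card V * c) := by
  have hrowx : ∑ u, ∑ v, a u v * x u = d * ∑ v, x v := by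
    simp only [← sum_mul, hrow, mul_sum]
  have hcolx : ∑ u, ∑ v, a u v * x v = d * ∑ v, x v := by
    rw [sum_comm]
    simp only [← sum_mul, fun v => (sum_congr rfl fun u _ => hsym u v).trans (hrow v), mul_sum]
  have htot : ∑ u, ∑ v, a u v = Fintype.card V * d := by
    simp only [hrow, sum_const, card_univ, nsmul_eq_mul]
  have hpoint : ∀ u v, a u v * (x u - c) * (x v - c) =
      a u v * x u * x v - c * (a u v * x u) - c * (a u v * x v) + c ^ 2 * a u v :=
    fun u v => by ring
  simp only [hpoint, sum_add_distrib, sum_sub_distrib, ← mul_sum, hrowx, hcolx, htot]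
  ring

lemma one_sub_mul_sum_abs_sub_sq_le (hsym : ∀ u v, a u v = a v u) (hnn : ∀ u v, 0 ≤ a u v)
    {μ μ₂ : ℝ} (hd : 0 < d) (hrow : ∀ u, ∑ v, a u v = d)
    (hray : ∀ g : V → ℝ, (∑ v, g v) = 0 →
      (∑ u, ∑ v, a u v * g u * g v) ≤ d * μ₂ * ∑ v, g v ^ 2)
    {f : V → ℝ} (heig : ∀ u, ∑ v, a u v * f v = d * μ * f u)
    {c : ℝ} (hc : ∑ v, |f v| = Fintype.card V * c) :
    (1 - μ₂) * ∑ v, (|f v| - c) ^ 2 ≤ (1 + μ) * ∑ v, f v ^ 2 := by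
  have hmean : ∑ v, (|f v| - c) = 0 := by
    rw [sum_sub_distrib, hc, sum_const, card_univ, nsmul_eq_mul, sub_self]
  have hsq : ∑ v, (|f v| - c) ^ 2 = ∑ v, f v ^ 2 - Fintype.card V * c ^ 2 := by
    simp only [sub_sq, sq_abs, sum_add_distrib, sum_sub_distrib, ← sum_mul, ← mul_sum, hc,
      sum_const, card_univ, nsmul_eq_mul]
    ring
  have hupper := hray _ hmean
  rw [sum_sum_mul_sub_mul_sub hsym hrow, hc, hsq] at hupper
  have hlower := neg_sum_sum_mul_mul_le_sum_sum_mul_abs_mul_abs hnn f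
  rw [sum_sum_mul_mul_of_eigen heig] at hlower
  rw [hsq]
  refine le_of_mul_le_mul_left ?_ hd
  linarith

lemma sum_sub_fStr_sq_le [Nonempty V] (hsym : ∀ u v, a u v = a v u) (hnn : ∀ u v, 0 ≤ a u v)
    {μ μ₂ : ℝ} (hd : 0 < d) (hrow : ∀ u, ∑ v, a u v = d)
    (hray : ∀ g : V → ℝ, (∑ v, g v) = 0 →
      (∑ u, ∑ v, a u v * g u * g v) ≤ d * μ₂ * ∑ v, g v ^ 2)
    {f : V → ℝ} (heig : ∀ u, ∑ v, a u v * f v = d * μ * f u) (hnz : ∀ v, f v ≠ 0)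
    (hκ : 0 < (1 + μ) / (1 - μ₂)) :
    ∑ v, (f v - fStr f v) ^ 2 ≤ (1 + μ) / (1 - μ₂) * ∑ v, f v ^ 2 := by
  have hμ : |d * μ| ≤ d :=
    abs_eigenvalue_le_of_row_sum hnn hrow
      (fun h => hnz (Classical.arbitrary V) (congrFun h _)) heig
  rw [abs_mul, abs_of_pos hd] at hμ
  -- `-1 ≤ μ` excludes the case where both `1 + μ` and `1 - μ₂` are negative.
  have hμ₂ : 0 < 1 - μ₂ := by
    rcases div_pos_iff.mp hκ with ⟨-, h⟩ | ⟨h, -⟩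
    · exact h
    · nlinarith [neg_abs_le μ]
  rw [sum_sub_fStr_sq f hnz, div_mul_eq_mul_div, le_div_iff₀ hμ₂, mul_comm]
  exact one_sub_mul_sum_abs_sub_sq_le hsym hnn hd hrow hray heig
    (mul_div_cancel₀ _ (Nat.cast_ne_zero.mpr Fintype.card_ne_zero)).symm

end Spectral

lemma sum_max_mul_max_eq_sum_filter {ι : Type*} [Fintype ι] (x y : ι → ℝ) :
    ∑ i, max (x i) 0 * max (y i) 0 =
      ∑ i ∈ univ.filter (fun i => 0 < x i ∧ 0 < y i), x i * y i := by
  rw [sum_filter]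
  refine sum_congr rfl fun i _ => ?_
  split_ifs with h
  · rw [max_eq_left h.1.le, max_eq_left h.2.le]
  · rcases not_and_or.mp h with h | h <;> simp [max_eq_right (not_lt.mp h)]

theorem correlation_translate_bound_general {V : Type*} [Fintype V]
    (hV : 2 ≤ Fintype.card V)
    (a : V → V → ℝ) (hsym : ∀ u v, a u v = a v u) (hnn : ∀ u v, 0 ≤ a u v)
    (d μ μ₂ : ℝ) (hd : 0 < d) (hrow : ∀ u, ∑ v, a u v = d)
    (hray : ∀ g : V → ℝ, (∑ v, g v) = 0 →
      (∑ u, ∑ v, a u v * g u * g v) ≤ d * μ₂ * ∑ v, g v ^ 2)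
    (f : V → ℝ) (heig : ∀ u, ∑ v, a u v * f v = d * μ * f u)
    (hnz : ∀ v, f v ≠ 0)
    (hκ : 0 < (1 + μ) / (1 - μ₂) ∧ (1 + μ) / (1 - μ₂) < 1)
    (π : Equiv.Perm V) :
    |(∑ v, max (f v) 0 * max (f (π.symm v)) 0) -
        (((Finset.univ.filter fun v => 0 < f v ∧ 0 < f (π.symm v)).card : ℝ) /
            (Fintype.card V : ℝ)) * ∑ v, fStr f v ^ 2| ≤
      (2 * Real.sqrt (((Finset.univ.filter fun v => 0 < f v ∧ 0 < f (π.symm v)).card : ℝ) /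
            (Fintype.card V : ℝ)) * Real.sqrt ((1 + μ) / (1 - μ₂)) +
          (1 + μ) / (1 - μ₂)) *
        ∑ v, f v ^ 2 := by
  have : Nonempty V := Fintype.card_pos_iff.mp (by omega)
  set I := univ.filter fun v => 0 < f v ∧ 0 < f (π.symm v)
  set n : ℝ := (Fintype.card V : ℝ)
  set c := (∑ w, |f w|) / n
  set κ := (1 + μ) / (1 - μ₂)
  set S := ∑ v, f v ^ 2
  set m := fun v => f v - fStr f v
  have hn : 0 < n := by positivity
  have hm : ∑ v, m v ^ 2 ≤ κ * S := sum_sub_fStr_sq_le hsym hnn hd hrow hray heig hnz hκ.1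
  have hmπ : ∑ v, m (π.symm v) ^ 2 ≤ κ * S := (Equiv.sum_comp π.symm fun v => m v ^ 2).trans_le hm
  have hS : 0 ≤ S := sum_nonneg fun v _ => sq_nonneg (f v)
  have hfI : ∀ v ∈ I, f v * f (π.symm v) = (c + m v) * (c + m (π.symm v)) := by
    intro v hv
    obtain ⟨-, hv, hπv⟩ := mem_filter.mp hv
    simp only [m, fStr_apply, sgnInd_of_pos f hv, sgnInd_of_pos f hπv, c, n]
    ring
  have hstr : (#I / n) * ∑ v, fStr f v ^ 2 = #I * c ^ 2 := by
    rw [sum_fStr_sq f hnz]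
    change #I / n * (n * c ^ 2) = #I * c ^ 2
    field_simp
  have hc : √(#I * c ^ 2) ≤ √(#I / n) * √S := by
    have : c ^ 2 ≤ S / n := by
      simpa [sq_abs] using sum_div_card_sq_le_sum_sq_div_card (s := univ) (f := fun v => |f v|)
    rw [← Real.sqrt_mul (by positivity), div_mul_eq_mul_div, mul_div_assoc]
    gcongr
  calc _ = |∑ v ∈ I, (c + m v) * (c + m (π.symm v)) - #I * c ^ 2| := by
        rw [sum_max_mul_max_eq_sum_filter, sum_congr rfl hfI, hstr]
    _ ≤ 2 * √(#I * c ^ 2) * √(κ * S) + κ * S :=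
        abs_sum_add_mul_add_sub_card_mul_sq_le I c _ hm hmπ
    _ ≤ 2 * (√(#I / n) * √S) * (√κ * √S) + κ * S := by
        rw [Real.sqrt_mul hκ.1.le]
        gcongr
    _ = (2 * √(#I / n) * √κ + κ) * S := by
        linear_combination (2 * √(#I / n) * √κ) * Real.mul_self_sqrt hS

/-- Under the hypotheses of the decomposition lemma, for any permutation `π` of `V`,
with `I = supp(f₊) ∩ π(supp(f₊))`,
`|⟨f₊, (π·f)₊⟩ − (|I|/n)‖f_str‖₂²| ≤ (2√(|I|/n)·√κ + κ)·‖f‖₂²`. -/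
theorem correlation_translate_bound {V : Type*} [Fintype V]
    (hV : 2 ≤ Fintype.card V)
    (a : V → V → ℝ) (hsym : ∀ u v, a u v = a v u) (hnn : ∀ u v, 0 ≤ a u v)
    (d μ μ₂ : ℝ) (hd : 0 < d) (hrow : ∀ u, ∑ v, a u v = d)
    (hray : ∀ g : V → ℝ, (∑ v, g v) = 0 →
      (∑ u, ∑ v, a u v * g u * g v) ≤ d * μ₂ * ∑ v, g v ^ 2)
    (hμ₂ : μ₂ ≠ 1)
    (f : V → ℝ) (heig : ∀ u, ∑ v, a u v * f v = d * μ * f u)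
    (horth : (∑ v, f v) = 0) (hnz : ∀ v, f v ≠ 0)
    (hκ : 0 < (1 + μ) / (1 - μ₂) ∧ (1 + μ) / (1 - μ₂) < 1)
    (π : Equiv.Perm V) :
    |(∑ v, max (f v) 0 * max (f (π.symm v)) 0) -
        (((Finset.univ.filter fun v => 0 < f v ∧ 0 < f (π.symm v)).card : ℝ) /
            (Fintype.card V : ℝ)) * ∑ v, fStr f v ^ 2| ≤
      (2 * Real.sqrt (((Finset.univ.filter fun v => 0 < f v ∧ 0 < f (π.symm v)).card : ℝ) /
            (Fintype.card V : ℝ)) * Real.sqrt ((1 + μ) / (1 - μ₂)) +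
          (1 + μ) / (1 - μ₂)) *
        ∑ v, f v ^ 2 :=
  correlation_translate_bound_general hV a hsym hnn d μ μ₂ hd hrow hray f heig hnz hκ π
end
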